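/- Let λ₀ be a real number with 0 < λ₀ < 1/2. Then (1/π) ∫₀^π sin(ν) · arctan(4λ₀·sin(ν)/(4λ₀² − 1)) dν = −2λ₀. -/

import Mathlib

/-!
Integrating by parts, `∫₀^π sin x · arctan (c sin x) dx = ∫₀^π c cos² x / (1 + c² sin² x) dx`.
With `k = √(1 + c²)` one has `1 + c² sin² x = cos² x + k² sin² x`, and a smooth branch of
`arctan (k tan x)` is an antiderivative of `k / (cos² x + k² sin² x)`, whose integral over `[0, π]`
is therefore `π`. This gives `π (k - 1) / c`, and for `c = 4λ₀ / (4λ₀² - 1)` with `0 < λ₀ < 1/2`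
one gets `k = (1 + 4λ₀²) / (1 - 4λ₀²)` and `(k - 1) / c = -2λ₀`.
-/

open Real

theorem cos_sq_add_mul_sin_sq_pos {b : ℝ} (hb : 0 < b) (x : ℝ) :
    0 < cos x ^ 2 + b * sin x ^ 2 := by
  rcases (sq_nonneg (cos x)).eq_or_lt with h | h
  · nlinarith [sin_sq_add_cos_sq x]
  · positivity

/-- The continuous branch of `arctan (k * tan x)` through `0`: if `tan θ = k tan x` then
`tan (θ - x) = (k - 1) sin x cos x / (cos² x + k sin² x)`. -/
noncomputable def arctanMulTanLift (k x : ℝ) : ℝ :=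
  x + arctan ((k - 1) * sin x * cos x / (cos x ^ 2 + k * sin x ^ 2))

theorem hasDerivAt_arctanMulTanLift {k : ℝ} (hk : 0 < k) (x : ℝ) :
    HasDerivAt (arctanMulTanLift k) (k / (cos x ^ 2 + k ^ 2 * sin x ^ 2)) x := by
  have hP := sin_sq_add_cos_sq x
  have hD := cos_sq_add_mul_sin_sq_pos hk x
  have hE := cos_sq_add_mul_sin_sq_pos (pow_pos hk 2) x
  have hnum : HasDerivAt (fun y => (k - 1) * sin y * cos y)
      ((k - 1) * (cos x ^ 2 - sin x ^ 2)) x :=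
    (((hasDerivAt_sin x).const_mul (k - 1)).mul (hasDerivAt_cos x)).congr_deriv (by ring)
  have hden : HasDerivAt (fun y => cos y ^ 2 + k * sin y ^ 2)
      (2 * (k - 1) * sin x * cos x) x :=
    (((hasDerivAt_cos x).pow 2).add (((hasDerivAt_sin x).pow 2).const_mul k)).congr_deriv
      (by push_cast; ring)
  have hsq : 1 + ((k - 1) * sin x * cos x / (cos x ^ 2 + k * sin x ^ 2)) ^ 2
      = (cos x ^ 2 + k ^ 2 * sin x ^ 2) / (cos x ^ 2 + k * sin x ^ 2) ^ 2 := by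
    field_simp
    linear_combination (cos x ^ 2 + k ^ 2 * sin x ^ 2) * hP
  refine ((hasDerivAt_id x).add (hnum.div hden hD.ne').arctan).congr_deriv ?_
  rw [Pi.div_apply, hsq]
  field_simp
  linear_combination (k * (sin x ^ 2 + cos x ^ 2 + 1) - (cos x ^ 2 + k ^ 2 * sin x ^ 2)) * hP

theorem continuous_div_cos_sq_add_sq_mul_sin_sq {k : ℝ} (hk : 0 < k) :
    Continuous fun x => k / (cos x ^ 2 + k ^ 2 * sin x ^ 2) :=
  continuous_const.div (by fun_prop) fun x => (cos_sq_add_mul_sin_sq_pos (pow_pos hk 2) x).ne'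

theorem integral_div_cos_sq_add_sq_mul_sin_sq {k : ℝ} (hk : 0 < k) :
    ∫ x in (0 : ℝ)..π, k / (cos x ^ 2 + k ^ 2 * sin x ^ 2) = π := by
  rw [intervalIntegral.integral_eq_sub_of_hasDerivAt
    (fun x _ => hasDerivAt_arctanMulTanLift hk x)
    ((continuous_div_cos_sq_add_sq_mul_sin_sq hk).intervalIntegrable 0 π)]
  simp [arctanMulTanLift]

theorem integral_sin_mul_arctan_mul_sin_eq_integral (c : ℝ) :
    ∫ x in (0 : ℝ)..π, sin x * arctan (c * sin x)
      = ∫ x in (0 : ℝ)..π, c * cos x ^ 2 / (1 + c ^ 2 * sin x ^ 2) := by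
  have hderiv (x : ℝ) : HasDerivAt (fun y => arctan (c * sin y))
      (c * cos x / (1 + c ^ 2 * sin x ^ 2)) x :=
    ((hasDerivAt_sin x).const_mul c).arctan.congr_deriv (by field_simp)
  have hcont : Continuous fun x => c * cos x / (1 + c ^ 2 * sin x ^ 2) :=
    Continuous.div (by fun_prop) (by fun_prop) fun x => by positivity
  have hparts := intervalIntegral.integral_mul_deriv_eq_deriv_mul (a := 0) (b := π) (v' := sin)
    (fun x _ => hderiv x) (fun x _ => (hasDerivAt_cos x).neg.congr_deriv (neg_neg _))
    (hcont.intervalIntegrable ..) (continuous_sin.intervalIntegrable ..)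
  simp only [sin_zero, sin_pi, mul_zero, arctan_zero, zero_mul, sub_zero, zero_sub,
    ← intervalIntegral.integral_neg] at hparts
  simp_rw [mul_comm (sin _), hparts, Pi.neg_apply]
  congr 1 with x
  ring

theorem integral_sin_mul_arctan_mul_sin (c : ℝ) :
    ∫ x in (0 : ℝ)..π, sin x * arctan (c * sin x) = π * (√(1 + c ^ 2) - 1) / c := by
  rcases eq_or_ne c 0 with rfl | hc
  · simp
  set k := √(1 + c ^ 2)
  have hk0 : 0 < k := sqrt_pos.2 (by positivity)
  have hk2 : k ^ 2 = 1 + c ^ 2 := sq_sqrt (by positivity)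
  have hintegrand (x : ℝ) : c * cos x ^ 2 / (1 + c ^ 2 * sin x ^ 2)
      = c⁻¹ * (k * (k / (cos x ^ 2 + k ^ 2 * sin x ^ 2)) - 1) := by
    have hE : cos x ^ 2 + k ^ 2 * sin x ^ 2 = 1 + c ^ 2 * sin x ^ 2 := by
      linear_combination hk2 * sin x ^ 2 + cos_sq_add_sin_sq x
    rw [hE, ← mul_div_assoc, ← sq, hk2]
    field_simp
    linear_combination c ^ 2 * sin_sq_add_cos_sq x
  rw [integral_sin_mul_arctan_mul_sin_eq_integral,
    intervalIntegral.integral_congr fun x _ => hintegrand x, intervalIntegral.integral_const_mul,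
    intervalIntegral.integral_sub
      (((continuous_div_cos_sq_add_sq_mul_sin_sq hk0).intervalIntegrable ..).const_mul k)
      intervalIntegrable_const,
    intervalIntegral.integral_const_mul, integral_div_cos_sq_add_sq_mul_sin_sq hk0]
  simp only [intervalIntegral.integral_const, sub_zero, smul_eq_mul, mul_one]
  field_simp

theorem expectation_sin_arctan (lam0 : ℝ) (h0 : 0 < lam0) (h1 : lam0 < 1 / 2) :
    (1 / π) * ∫ ν in (0 : ℝ)..π,
        Real.sin ν * Real.arctan (4 * lam0 * Real.sin ν / (4 * lam0 ^ 2 - 1))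
      = -2 * lam0 := by
  have hden : 0 < 1 - 4 * lam0 ^ 2 := by nlinarith
  have hsqrt : √(1 + (4 * lam0 / (4 * lam0 ^ 2 - 1)) ^ 2)
      = (1 + 4 * lam0 ^ 2) / (1 - 4 * lam0 ^ 2) := by
    rw [sqrt_eq_iff_eq_sq (by positivity) (by positivity)]
    have : 4 * lam0 ^ 2 - 1 ≠ 0 := by linarith
    field_simp
    ring
  simp_rw [mul_div_right_comm (4 * lam0) (sin _)]
  rw [integral_sin_mul_arctan_mul_sin, hsqrt]
  field_simp
  ring
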